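/- If a branching process β₁ approximates a branching process β₂ (there is an initial injective homomorphism from β₁ to β₂), then β₁ is isomorphic to a subprocess of β₂. -/

import Mathlib

open scoped Classical
noncomputable section

/-- A place/transition Petri net given by an explicit set of places and set of
transitions (within ambient types `α`, `τ`), pre and post multisets and an
initial marking. -/
structure SNet (α τ : Type) where
  places : Set α
  trans : Set τ
  pre : τ → Multiset α
  post : τ → Multiset α
  init : Multiset α

namespace SNet

variable {α τ : Type}

def fires (N : SNet α τ) (t : τ) (M M' : Multiset α) : Prop :=
  t ∈ N.trans ∧ N.pre t ≤ M ∧ M' = M - N.pre t + N.post t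

def step (N : SNet α τ) (M M' : Multiset α) : Prop := ∃ t, N.fires t M M'

def Reaches (N : SNet α τ) : Multiset α → Multiset α → Prop :=
  Relation.ReflTransGen N.step

def Reachable (N : SNet α τ) (M : Multiset α) : Prop := N.Reaches N.init M

/-- The flow relation on nodes (places ⊕ transitions) of the net. -/
def flow (N : SNet α τ) : α ⊕ τ → α ⊕ τ → Prop
  | Sum.inl p, Sum.inr t => p ∈ N.places ∧ t ∈ N.trans ∧ p ∈ N.pre t
  | Sum.inr t, Sum.inl p => p ∈ N.places ∧ t ∈ N.trans ∧ p ∈ N.post t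
  | _, _ => False

def le (N : SNet α τ) (x y : α ⊕ τ) : Prop := Relation.ReflTransGen N.flow x y

def lt (N : SNet α τ) (x y : α ⊕ τ) : Prop := Relation.TransGen N.flow x y

def Conflict (N : SNet α τ) (x y : α ⊕ τ) : Prop :=
  ∃ p ∈ N.places, ∃ t₁ ∈ N.trans, ∃ t₂ ∈ N.trans, t₁ ≠ t₂ ∧
    p ∈ N.pre t₁ ∧ p ∈ N.pre t₂ ∧
    N.le (Sum.inr t₁) x ∧ N.le (Sum.inr t₂) y ∧ Sum.inl p ≠ x ∧ Sum.inl p ≠ y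

def Concurrent (N : SNet α τ) (x y : α ⊕ τ) : Prop :=
  ¬ N.le x y ∧ ¬ N.le y x ∧ ¬ N.Conflict x y

/-- Places of `N` without incoming transitions, `°N`. -/
def minPlaces (N : SNet α τ) : Set α :=
  {p ∈ N.places | ∀ t ∈ N.trans, p ∉ N.post t}

/-- Places of `N` without outgoing transitions, `N°`. -/
def maxPlaces (N : SNet α τ) : Set α :=
  {p ∈ N.places | ∀ t ∈ N.trans, p ∉ N.pre t}

/-- Occurrence net (set-based version). -/
structure IsOccurrence (N : SNet α τ) : Prop where
  pre_nodup : ∀ t ∈ N.trans, (N.pre t).Nodup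
  post_nodup : ∀ t ∈ N.trans, (N.post t).Nodup
  pre_ne : ∀ t ∈ N.trans, N.pre t ≠ 0
  post_ne : ∀ t ∈ N.trans, N.post t ≠ 0
  pre_sub : ∀ t ∈ N.trans, ∀ p ∈ N.pre t, p ∈ N.places
  post_sub : ∀ t ∈ N.trans, ∀ p ∈ N.post t, p ∈ N.places
  unique_pred : ∀ p ∈ N.places, ∀ t₁ ∈ N.trans, ∀ t₂ ∈ N.trans,
    p ∈ N.post t₁ → p ∈ N.post t₂ → t₁ = t₂
  wf : WellFounded (fun x y : α ⊕ τ => N.flow y x)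
  no_self_conflict : ∀ t ∈ N.trans, ¬ N.Conflict (Sum.inr t) (Sum.inr t)
  init_nodup : N.init.Nodup
  init_iff : ∀ p, p ∈ N.init ↔ p ∈ N.minPlaces

/-- A cut: a maximal set of pairwise concurrent places. -/
def IsCut (N : SNet α τ) (C : Set α) : Prop :=
  C ⊆ N.places ∧
  (∀ p ∈ C, ∀ q ∈ C, p ≠ q → N.Concurrent (Sum.inl p) (Sum.inl q)) ∧
  (∀ p ∈ N.places, (∀ q ∈ C, p ≠ q → N.Concurrent (Sum.inl p) (Sum.inl q)) → p ∈ C)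

end SNet

/-- `(N, ℓP, ℓT)` is a branching process of the net `M`. -/
def IsBranchingProcess {α τ α' τ' : Type} (M : SNet α' τ') (N : SNet α τ)
    (ℓP : α → α') (ℓT : τ → τ') : Prop :=
  N.IsOccurrence ∧
  (∀ p ∈ N.places, ℓP p ∈ M.places) ∧
  (∀ t ∈ N.trans, ℓT t ∈ M.trans) ∧
  (∀ t ∈ N.trans, (N.pre t).map ℓP = M.pre (ℓT t) ∧
                  (N.post t).map ℓP = M.post (ℓT t)) ∧
  (∀ t₁ ∈ N.trans, ∀ t₂ ∈ N.trans,
    N.pre t₁ = N.pre t₂ → ℓT t₁ = ℓT t₂ → t₁ = t₂)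

/-- A net homomorphism between (the nets underlying) branching processes. -/
def IsNetHom {α₁ τ₁ α₂ τ₂ : Type} (N₁ : SNet α₁ τ₁) (N₂ : SNet α₂ τ₂)
    (hP : α₁ → α₂) (hT : τ₁ → τ₂) : Prop :=
  (∀ p ∈ N₁.places, hP p ∈ N₂.places) ∧
  (∀ t ∈ N₁.trans, hT t ∈ N₂.trans) ∧
  (∀ t ∈ N₁.trans, (N₁.pre t).map hP = N₂.pre (hT t) ∧
                   (N₁.post t).map hP = N₂.post (hT t))

/-- An initial net homomorphism additionally maps the initial marking onto the
initial marking. -/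
def IsInitialNetHom {α₁ τ₁ α₂ τ₂ : Type} (N₁ : SNet α₁ τ₁) (N₂ : SNet α₂ τ₂)
    (hP : α₁ → α₂) (hT : τ₁ → τ₂) : Prop :=
  IsNetHom N₁ N₂ hP hT ∧ N₁.init.map hP = N₂.init

/-- If a branching process `β₁` approximates `β₂` (there is an
initial injective homomorphism from `β₁` to `β₂` commuting with the labelings),
then `β₁` is isomorphic (by a bijective initial homomorphism commuting with the
labelings) to a subprocess of `β₂` (an initial subnet of `N₂` labeled by the
restriction of `ℓ₂`). -/
theorem stmt13 {α' τ' α₁ τ₁ α₂ τ₂ : Type}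
    (M : SNet α' τ') (N₁ : SNet α₁ τ₁) (N₂ : SNet α₂ τ₂)
    (ℓP₁ : α₁ → α') (ℓT₁ : τ₁ → τ') (ℓP₂ : α₂ → α') (ℓT₂ : τ₂ → τ')
    (hb₁ : IsBranchingProcess M N₁ ℓP₁ ℓT₁)
    (hb₂ : IsBranchingProcess M N₂ ℓP₂ ℓT₂)
    (hP : α₁ → α₂) (hT : τ₁ → τ₂)
    (hhom : IsInitialNetHom N₁ N₂ hP hT)
    (hcommP : ∀ p ∈ N₁.places, ℓP₂ (hP p) = ℓP₁ p)
    (hcommT : ∀ t ∈ N₁.trans, ℓT₂ (hT t) = ℓT₁ t)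
    (hinjP : Set.InjOn hP N₁.places) (hinjT : Set.InjOn hT N₁.trans) :
    ∃ N' : SNet α₂ τ₂,
      (N'.places ⊆ N₂.places ∧ N'.trans ⊆ N₂.trans ∧
        (∀ t ∈ N'.trans, N'.pre t = N₂.pre t ∧ N'.post t = N₂.post t) ∧
        N'.init = N₂.init) ∧
      IsBranchingProcess M N' ℓP₂ ℓT₂ ∧
      ∃ (gP : α₁ → α₂) (gT : τ₁ → τ₂),
        IsInitialNetHom N₁ N' gP gT ∧
        (∀ p ∈ N₁.places, ℓP₂ (gP p) = ℓP₁ p) ∧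
        (∀ t ∈ N₁.trans, ℓT₂ (gT t) = ℓT₁ t) ∧
        Set.BijOn gP N₁.places N'.places ∧
        Set.BijOn gT N₁.trans N'.trans := by
  obtain ⟨⟨hPl, hTl, hprepost⟩, hinit⟩ := hhom
  obtain ⟨hocc₁, hb₁P, hb₁T, hb₁pre, hb₁uniq⟩ := hb₁
  obtain ⟨hocc₂, hb₂P, hb₂T, hb₂pre, hb₂uniq⟩ := hb₂
  refine ⟨⟨hP '' N₁.places, hT '' N₁.trans, N₂.pre, N₂.post, N₂.init⟩, ?_, ?_, ?_⟩
  case refine_1 =>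
    refine ⟨?_, ?_, fun t _ => ⟨rfl, rfl⟩, rfl⟩
    · rintro p ⟨q, hq, rfl⟩; exact hPl q hq
    · rintro t ⟨s, hs, rfl⟩; exact hTl s hs
  all_goals {
  set N' : SNet α₂ τ₂ := ⟨hP '' N₁.places, hT '' N₁.trans, N₂.pre, N₂.post, N₂.init⟩
    with hN'
  have hplsub : N'.places ⊆ N₂.places := by rintro p ⟨q, hq, rfl⟩; exact hPl q hq
  have htrsub : N'.trans ⊆ N₂.trans := by rintro t ⟨s, hs, rfl⟩; exact hTl s hs
  have hflow : ∀ x y, N'.flow x y → N₂.flow x y := by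
    rintro (p | t) (q | s) h <;> simp only [SNet.flow] at h ⊢ <;>
      first
      | exact h
      | exact ⟨hplsub h.1, htrsub h.2.1, h.2.2⟩
  have hle : ∀ x y, N'.le x y → N₂.le x y := fun x y h =>
    Relation.ReflTransGen.mono (fun a b => hflow a b) x y h
  have hconf : ∀ x y, N'.Conflict x y → N₂.Conflict x y := by
    rintro x y ⟨p, hp, t₁, ht₁, t₂, ht₂, hne, h1, h2, h3, h4, h5, h6⟩
    exact ⟨p, hplsub hp, t₁, htrsub ht₁, t₂, htrsub ht₂, hne, h1, h2,
      hle _ _ h3, hle _ _ h4, h5, h6⟩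
  have hocc' : N'.IsOccurrence := by
    constructor
    · exact fun t ht => hocc₂.pre_nodup t (htrsub ht)
    · exact fun t ht => hocc₂.post_nodup t (htrsub ht)
    · exact fun t ht => hocc₂.pre_ne t (htrsub ht)
    · exact fun t ht => hocc₂.post_ne t (htrsub ht)
    · rintro t ⟨s, hs, rfl⟩ p hpmem
      have : N₂.pre (hT s) = (N₁.pre s).map hP := ((hprepost s hs).1).symm
      rw [show N'.pre (hT s) = N₂.pre (hT s) from rfl, this] at hpmem
      obtain ⟨q, hq, rfl⟩ := Multiset.mem_map.mp hpmem
      exact ⟨q, hocc₁.pre_sub s hs q hq, rfl⟩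
    · rintro t ⟨s, hs, rfl⟩ p hpmem
      have : N₂.post (hT s) = (N₁.post s).map hP := ((hprepost s hs).2).symm
      rw [show N'.post (hT s) = N₂.post (hT s) from rfl, this] at hpmem
      obtain ⟨q, hq, rfl⟩ := Multiset.mem_map.mp hpmem
      exact ⟨q, hocc₁.post_sub s hs q hq, rfl⟩
    · exact fun p hp t₁ ht₁ t₂ ht₂ h1 h2 =>
        hocc₂.unique_pred p (hplsub hp) t₁ (htrsub ht₁) t₂ (htrsub ht₂) h1 h2
    · exact Subrelation.wf (fun {x y} h => hflow y x h) hocc₂.wf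
    · intro t ht hc
      exact hocc₂.no_self_conflict t (htrsub ht) (hconf _ _ hc)
    · exact hocc₂.init_nodup
    · intro p
      constructor
      · intro hp
        have hp2 : p ∈ N₂.minPlaces := (hocc₂.init_iff p).mp hp
        have hpmem : p ∈ N'.places := by
          have : p ∈ Multiset.map hP N₁.init := by rw [hinit]; exact hp
          obtain ⟨q, hq, rfl⟩ := Multiset.mem_map.mp this
          have hq1 : q ∈ N₁.minPlaces := (hocc₁.init_iff q).mp hq
          exact ⟨q, hq1.1, rfl⟩
        exact ⟨hpmem, fun t ht => hp2.2 t (htrsub ht)⟩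
      · rintro ⟨⟨q, hq, rfl⟩, hnp⟩
        have hq1 : q ∈ N₁.minPlaces := by
          refine ⟨hq, fun s hs hmem => ?_⟩
          have : hP q ∈ N₂.post (hT s) := by
            rw [← (hprepost s hs).2]
            exact Multiset.mem_map_of_mem hP hmem
          exact hnp (hT s) ⟨s, hs, rfl⟩ this
        have : q ∈ N₁.init := (hocc₁.init_iff q).mpr hq1
        show hP q ∈ N₂.init
        rw [← hinit]
        exact Multiset.mem_map_of_mem hP this
  first
  | exact ⟨hocc', fun p hp => hb₂P p (hplsub hp), fun t ht => hb₂T t (htrsub ht),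
      fun t ht => hb₂pre t (htrsub ht),
      fun t₁ ht₁ t₂ ht₂ h1 h2 => hb₂uniq t₁ (htrsub ht₁) t₂ (htrsub ht₂) h1 h2⟩
  | exact ⟨hP, hT,
      ⟨⟨fun p hp => ⟨p, hp, rfl⟩, fun t ht => ⟨t, ht, rfl⟩,
        fun t ht => hprepost t ht⟩, hinit⟩,
      hcommP, hcommT,
      ⟨fun p hp => ⟨p, hp, rfl⟩, hinjP, fun p hp => hp⟩,
      ⟨fun t ht => ⟨t, ht, rfl⟩, hinjT, fun t ht => ht⟩⟩
  }
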